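/- Let O ⊂ ℝⁿ be a bounded open set with C¹ boundary, A a constant skew-symmetric matrix, and c ∈ ℝⁿ. If (c + A x) · ν_O(x) ≤ 0 for every x ∈ ∂O (ν_O the inward unit normal), then (c + A x) · ν_O(x) = 0 for every x ∈ ∂O. -/

import Mathlib

/-!
The field `V x = -(c + A x)` is affine with skew-symmetric linear part, so its flow `ϕ` acts by
isometries and preserves volume. The sign hypothesis says that `V` points weakly into `O` along
`∂O`, so by Nagumo's invariance argument `ϕ t` maps the compact set `K = closure O` into itself
for `t ≥ 0`. A volume-preserving continuous self-map of `K` has an image of full measure in `K`,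
which is closed and therefore contains the open set `O` and its closure `K`: the flow also maps
`K` into itself backwards in time. If `V` pointed strictly into `O` at some `x₀ ∈ ∂O`, the
backward orbit of `x₀` would immediately leave `K`.
-/

open NormedSpace Set Filter Metric Matrix
open scoped RealInnerProductSpace Topology

section AffineFlow

variable {F : Type*} [NormedAddCommGroup F] [NormedSpace ℝ F] [CompleteSpace F]
  (M : F →L[ℝ] F) (w : F)

theorem hasDerivAt_exp_smul_apply (v : F) (t : ℝ) :
    HasDerivAt (fun t : ℝ => exp (t • M) v) (M (exp (t • M) v)) t := by
  simpa using (hasDerivAt_exp_smul_const' M t).clm_apply (hasDerivAt_const t v)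

theorem continuous_exp_smul_apply (v : F) : Continuous fun t : ℝ => exp (t • M) v :=
  continuous_iff_continuousAt.2 fun t => (hasDerivAt_exp_smul_apply M v t).continuousAt

theorem apply_integral_exp_smul_apply (t : ℝ) :
    M (∫ s in (0 : ℝ)..t, exp (s • M) w) = exp (t • M) w - w := by
  rw [← M.intervalIntegral_comp_comm ((continuous_exp_smul_apply M w).intervalIntegrable 0 t),
    intervalIntegral.integral_eq_sub_of_hasDerivAt (fun s _ => hasDerivAt_exp_smul_apply M w s)
      ((M.continuous.comp (continuous_exp_smul_apply M w)).intervalIntegrable 0 t)]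
  simp

theorem hasDerivAt_integral_exp_smul_apply (t : ℝ) :
    HasDerivAt (fun t => ∫ s in (0 : ℝ)..t, exp (s • M) w) (exp (t • M) w) t :=
  (continuous_exp_smul_apply M w).integral_hasStrictDerivAt 0 t |>.hasDerivAt

theorem hasDerivAt_exp_smul_apply_add_integral (x : F) (t : ℝ) :
    HasDerivAt (fun t => exp (t • M) x + ∫ s in (0 : ℝ)..t, exp (s • M) w)
      (M (exp (t • M) x + ∫ s in (0 : ℝ)..t, exp (s • M) w) + w) t := by
  refine ((hasDerivAt_exp_smul_apply M x t).add
    (hasDerivAt_integral_exp_smul_apply M w t)).congr_deriv ?_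
  rw [map_add, apply_integral_exp_smul_apply]
  abel

noncomputable def affineFlow : Flow ℝ F where
  toFun t x := exp (t • M) x + ∫ s in (0 : ℝ)..t, exp (s • M) w
  cont' := by
    refine ((((differentiable_exp_smul_const ℝ M).continuous.comp continuous_fst)).clm_apply
      continuous_snd).add ?_
    exact (continuous_iff_continuousAt.2 fun t =>
      (hasDerivAt_integral_exp_smul_apply M w t).continuousAt).comp continuous_fst
  map_add' t₁ t₂ x := by
    have := ODE_solution_unique_univ (v := fun _ y => M y + w) (s := fun _ => univ) (t₀ := 0)
      (f := fun t => exp ((t + t₂) • M) x + ∫ s in (0 : ℝ)..(t + t₂), exp (s • M) w)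
      (g := fun t => exp (t • M) (exp (t₂ • M) x + ∫ s in (0 : ℝ)..t₂, exp (s • M) w)
        + ∫ s in (0 : ℝ)..t, exp (s • M) w)
      (fun _ => (M.lipschitz.add (LipschitzWith.const w)).lipschitzOnWith)
      (fun t => ⟨(hasDerivAt_exp_smul_apply_add_integral M w x (t + t₂)).comp_add_const t t₂,
        trivial⟩)
      (fun t => ⟨hasDerivAt_exp_smul_apply_add_integral M w _ t, trivial⟩)
      (by simp)
    exact congrFun this t₁
  map_zero' x := by simp

theorem hasDerivAt_affineFlow (x : F) (t : ℝ) :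
    HasDerivAt (fun t => affineFlow M w t x) (M (affineFlow M w t x) + w) t :=
  hasDerivAt_exp_smul_apply_add_integral M w x t

end AffineFlow

theorem Flow.isometry_of_hasDerivAt {E : Type*} [NormedAddCommGroup E] [InnerProductSpace ℝ E]
    (ϕ : Flow ℝ E) {V : E → E} (hϕ : ∀ x t, HasDerivAt (fun t => ϕ t x) (V (ϕ t x)) t)
    (hV : ∀ a b, ⟪a - b, V a - V b⟫ = 0) (t : ℝ) : Isometry (ϕ t) := by
  refine Isometry.of_dist_eq fun x y => ?_
  have hderiv : ∀ s, HasDerivAt (fun s => ‖ϕ s x - ϕ s y‖ ^ 2) 0 s := fun s => by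
    simpa [hV] using ((hϕ x s).sub (hϕ y s)).norm_sq
  have hconst := is_const_of_deriv_eq_zero (fun s => (hderiv s).differentiableAt)
    (fun s => (hderiv s).deriv) t 0
  simp only [Flow.map_zero_apply] at hconst
  rw [dist_eq_norm, dist_eq_norm]
  exact (sq_eq_sq₀ (norm_nonneg _) (norm_nonneg _)).1 hconst

theorem isometry_affineFlow {E : Type*} [NormedAddCommGroup E] [InnerProductSpace ℝ E]
    [CompleteSpace E] {M : E →L[ℝ] E} (hM : ∀ v, ⟪v, M v⟫ = 0) (w : E) (t : ℝ) :
    Isometry (affineFlow M w t) :=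
  (affineFlow M w).isometry_of_hasDerivAt (hasDerivAt_affineFlow M w) (fun a b => by
    rw [add_sub_add_right_eq_sub, ← M.map_sub, hM]) t

open MeasureTheory in
theorem Isometry.volume_image {V : Type*} [NormedAddCommGroup V] [InnerProductSpace ℝ V]
    [FiniteDimensional ℝ V] [MeasurableSpace V] [BorelSpace V] {e : V → V} (he : Isometry e)
    (s : Set V) : volume (e '' s) = volume s := by
  rw [← InnerProductSpace.euclideanHausdorffMeasure_eq_volume]
  exact he.euclideanHausdorffMeasure_image s

open MeasureTheory in
theorem subset_image_of_measure_image_eq {X : Type*} [TopologicalSpace X] [T2Space X]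
    [MeasurableSpace X] [OpensMeasurableSpace X] {μ : Measure X} [μ.IsOpenPosMeasure]
    [IsFiniteMeasureOnCompacts μ] {e : X → X} (he : Continuous e) {K U : Set X}
    (hK : IsCompact K) (hKe : MapsTo e K K) (hμ : μ (e '' K) = μ K) (hU : IsOpen U)
    (hUK : U ⊆ K) : U ⊆ e '' K := by
  have hclosed : IsClosed (e '' K) := (hK.image he).isClosed
  have hnull : μ (K \ e '' K) = 0 := by
    rw [measure_sdiff hKe.image_subset hclosed.measurableSet.nullMeasurableSet
      (hμ ▸ hK.measure_lt_top.ne), hμ, tsub_self]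
  intro x hx
  by_contra hxe
  exact (hU.sdiff hclosed).measure_ne_zero μ ⟨x, hx, hxe⟩
    (measure_mono_null (sdiff_subset_sdiff_left hUK) hnull)

theorem HasDerivAt.eventually_nhdsGT_neg {g : ℝ → ℝ} {g' a : ℝ} (hg : HasDerivAt g g' a)
    (hg' : g' < 0) (ha : g a = 0) : ∀ᶠ t in 𝓝[>] a, g t < 0 := by
  filter_upwards [nhdsGT_le_nhdsNE a ((hasDerivAt_iff_tendsto_slope.1 hg).eventually_lt_const hg'),
    self_mem_nhdsWithin] with t ht (hat : a < t)
  rw [slope_def_field, ha, sub_zero] at ht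
  rcases div_neg_iff.1 ht with ⟨-, h⟩ | ⟨h, -⟩ <;> linarith

theorem HasDerivAt.eventually_nhdsLT_pos {g : ℝ → ℝ} {g' a : ℝ} (hg : HasDerivAt g g' a)
    (hg' : g' < 0) (ha : g a = 0) : ∀ᶠ t in 𝓝[<] a, 0 < g t := by
  filter_upwards [nhdsLT_le_nhdsNE a ((hasDerivAt_iff_tendsto_slope.1 hg).eventually_lt_const hg'),
    self_mem_nhdsWithin] with t ht (hta : t < a)
  rw [slope_def_field, ha, sub_zero] at ht
  rcases div_neg_iff.1 ht with ⟨h, -⟩ | ⟨-, h⟩ <;> linarith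

theorem eventually_infDist_le_mul_of_hasFDerivAt {E : Type*} [NormedAddCommGroup E]
    [NormedSpace ℝ E] {f : E → ℝ} {f' : E →L[ℝ] ℝ} {γ : ℝ → E} {v : E} {S : Set E}
    (hf : HasFDerivAt f f' (γ 0)) (hf0 : f (γ 0) = 0) (hf' : f' ≠ 0) (hγ : HasDerivAt γ v 0)
    (hv : f' v ≤ 0) (hS : {x | f x < 0} ⊆ S) {θ : ℝ} (hθ : 0 < θ) :
    ∀ᶠ h in 𝓝[>] 0, infDist (γ h) S ≤ θ * h := by
  obtain ⟨u, hu⟩ : ∃ u, 0 < f' u := by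
    by_contra! h
    exact hf' (ContinuousLinearMap.ext fun u => le_antisymm (h u) (by simpa using h (-u)))
  have hu0 : u ≠ 0 := by rintro rfl; simp at hu
  set e := ‖u‖⁻¹ • u
  have he : 0 < f' e := by simpa [e] using mul_pos (inv_pos.2 (norm_pos_iff.2 hu0)) hu
  -- Pushing `γ h` back by `θ h` along the unit vector `e` makes `f` decrease at a positive rate.
  set z : ℝ → E := fun h => γ h - (θ * h) • e
  have hz : HasDerivAt z (v - θ • e) 0 :=
    (hγ.sub (((hasDerivAt_id' 0).const_mul θ).smul_const e)).congr_deriv (by rw [mul_one])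
  have hfz : HasDerivAt (fun h => f (z h)) (f' (v - θ • e)) 0 :=
    hf.comp_hasDerivAt_of_eq (x := 0) hz (by simp [z])
  have hslope : f' (v - θ • e) < 0 := by
    rw [map_sub, map_smul, smul_eq_mul]
    nlinarith
  filter_upwards [hfz.eventually_nhdsGT_neg hslope (by simpa [z] using hf0),
    self_mem_nhdsWithin] with h hzh (hh : 0 < h)
  calc infDist (γ h) S ≤ dist (γ h) (z h) := infDist_le_dist_of_mem (hS hzh)
    _ = θ * h := by
      simp [z, norm_smul, e, hu0, abs_of_pos hθ, abs_of_pos hh]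

/-- Nagumo's subtangency condition: `infDist (ϕ h y) K = o(h)` as `h → 0⁺`. -/
def Flow.IsSubtangentAt {X : Type*} [MetricSpace X] (ϕ : Flow ℝ X) (K : Set X) (y : X) : Prop :=
  ∀ θ > 0, ∀ᶠ h in 𝓝[>] 0, infDist (ϕ h y) K ≤ θ * h

theorem Flow.isSubtangentAt_of_mem_interior {X : Type*} [MetricSpace X] (ϕ : Flow ℝ X)
    {K : Set X} {y : X} (hy : y ∈ interior K) : ϕ.IsSubtangentAt K y := by
  intro θ hθ
  have hcont : Tendsto (fun h => ϕ h y) (𝓝 0) (𝓝 y) := by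
    simpa using (ϕ.continuous continuous_id (continuous_const (y := y))).tendsto 0
  filter_upwards [nhdsWithin_le_nhds (hcont (isOpen_interior.mem_nhds hy)),
    self_mem_nhdsWithin] with h hh (hpos : 0 < h)
  rw [infDist_zero_of_mem (interior_subset hh)]
  positivity

theorem Flow.mapsTo_of_isSubtangentAt {X : Type*} [MetricSpace X] (ϕ : Flow ℝ X)
    (hϕ : ∀ t, 0 ≤ t → LipschitzWith 1 (ϕ t)) {K : Set X} (hK : IsCompact K)
    (htan : ∀ y ∈ frontier K, ϕ.IsSubtangentAt K y) {T : ℝ} (hT : 0 ≤ T) :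
    MapsTo (ϕ T) K K := by
  intro x hx
  have htan' : ∀ y ∈ K, ϕ.IsSubtangentAt K y := fun y hy => by
    by_cases hyi : y ∈ interior K
    · exact ϕ.isSubtangentAt_of_mem_interior hyi
    · exact htan y ⟨subset_closure hy, hyi⟩
  set δ : ℝ → ℝ := fun t => infDist (ϕ t x) K
  have hδ : ∀ t ∈ Icc 0 T, δ t ≤ 0 := by
    refine image_le_of_liminf_slope_right_le_deriv_boundary (f := δ) (B := fun _ => 0)
      (B' := fun _ => 0)
      ((continuous_infDist_pt K).comp (ϕ.continuous continuous_id continuous_const)).continuousOn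
      (by simp [δ, infDist_zero_of_mem hx]) continuousOn_const
      (fun t _ => hasDerivWithinAt_const t _ 0) ?_
    intro t _ r hr
    obtain ⟨y, hyK, hy⟩ := hK.exists_infDist_eq_dist ⟨x, hx⟩ (ϕ t x)
    have hsub : Tendsto (fun z => z - t) (𝓝[>] t) (𝓝[>] 0) :=
      tendsto_nhdsWithin_of_tendsto_nhds_of_eventually_within _
        (((continuous_sub_right t).tendsto' t 0 (sub_self t)).mono_left nhdsWithin_le_nhds)
        (eventually_nhdsWithin_of_forall fun _ hz => sub_pos.2 (mem_Ioi.1 hz))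
    refine Eventually.frequently ?_
    filter_upwards [hsub.eventually (htan' y hyK (r / 2) (half_pos hr)), self_mem_nhdsWithin]
      with z hz (htz : t < z)
    -- Compare the orbit of `x` with the orbit of the point `y ∈ K` nearest to `ϕ t x`.
    have hδz : δ z ≤ r / 2 * (z - t) + δ t := calc
      δ z = infDist (ϕ (z - t) (ϕ t x)) K := by simp only [δ, ← ϕ.map_add, sub_add_cancel]
      _ ≤ infDist (ϕ (z - t) y) K + dist (ϕ (z - t) (ϕ t x)) (ϕ (z - t) y) :=
        infDist_le_infDist_add_dist
      _ ≤ r / 2 * (z - t) + dist (ϕ t x) y := by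
        gcongr
        simpa using (hϕ _ (sub_nonneg.2 htz.le)).dist_le_mul (ϕ t x) y
      _ = r / 2 * (z - t) + δ t := by rw [← hy]
    rw [slope_def_field, div_lt_iff₀ (sub_pos.2 htz)]
    nlinarith
  exact (hK.isClosed.mem_iff_infDist_zero ⟨x, hx⟩).2
    (le_antisymm (hδ T ⟨hT, le_rfl⟩) infDist_nonneg)

theorem Matrix.inner_toEuclideanCLM_self_of_transpose_eq_neg {ι : Type*} [Fintype ι]
    [DecidableEq ι] {A : Matrix ι ι ℝ} (hA : Aᵀ = -A) (v : EuclideanSpace ℝ ι) :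
    ⟪v, toEuclideanCLM (𝕜 := ℝ) A v⟫ = 0 := by
  have h : v.ofLp ⬝ᵥ A *ᵥ v.ofLp = -(v.ofLp ⬝ᵥ A *ᵥ v.ofLp) := by
    conv_lhs => rw [dotProduct_mulVec, ← mulVec_transpose, hA, neg_mulVec, neg_dotProduct,
      dotProduct_comm]
  rw [inner_toEuclideanCLM]
  linarith

theorem Flow.mapsTo_closure_setOf_lt_zero {E : Type*} [NormedAddCommGroup E]
    [NormedSpace ℝ E] (ϕ : Flow ℝ E) {V : E → E}
    (hϕ : ∀ x t, HasDerivAt (fun t => ϕ t x) (V (ϕ t x)) t) {f : E → ℝ} (hf : Differentiable ℝ f)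
    (hreg : ∀ y ∈ frontier {x | f x < 0}, fderiv ℝ f y ≠ 0)
    (hV : ∀ y ∈ frontier {x | f x < 0}, fderiv ℝ f y (V y) ≤ 0)
    (hlip : ∀ t, 0 ≤ t → LipschitzWith 1 (ϕ t)) (hK : IsCompact (closure {x | f x < 0}))
    {T : ℝ} (hT : 0 ≤ T) : MapsTo (ϕ T) (closure {x | f x < 0}) (closure {x | f x < 0}) := by
  refine ϕ.mapsTo_of_isSubtangentAt hlip hK (fun y hy θ hθ => ?_) hT
  have hyO := frontier_closure_subset hy
  exact eventually_infDist_le_mul_of_hasFDerivAt (by simpa using (hf y).hasFDerivAt)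
    (by simpa using frontier_lt_subset_eq hf.continuous continuous_const hyO) (hreg y hyO)
    (by simpa using hϕ y 0) (hV y hyO) subset_closure hθ

theorem Flow.fderiv_apply_eq_zero_of_mem_frontier {E : Type*} [NormedAddCommGroup E]
    [InnerProductSpace ℝ E] [FiniteDimensional ℝ E] [MeasurableSpace E] [BorelSpace E]
    (ϕ : Flow ℝ E) {V : E → E}
    (hϕ : ∀ x t, HasDerivAt (fun t => ϕ t x) (V (ϕ t x)) t) {f : E → ℝ} (hf : Differentiable ℝ f)
    (hreg : ∀ y ∈ frontier {x | f x < 0}, fderiv ℝ f y ≠ 0)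
    (hV : ∀ y ∈ frontier {x | f x < 0}, fderiv ℝ f y (V y) ≤ 0) (hiso : ∀ t, Isometry (ϕ t))
    (hb : Bornology.IsBounded {x | f x < 0}) :
    ∀ y ∈ frontier {x | f x < 0}, fderiv ℝ f y (V y) = 0 := by
  intro x₀ hx₀
  by_contra hne
  set K := closure {x | f x < 0}
  have hK : IsCompact K := hb.isCompact_closure
  have hγ : HasDerivAt (fun t => f (ϕ t x₀)) (fderiv ℝ f x₀ (V x₀)) 0 :=
    (hf x₀).hasFDerivAt.comp_hasDerivAt_of_eq (x := 0) (by simpa using hϕ x₀ 0) (by simp)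
  obtain ⟨t, ht, htneg⟩ := ((hγ.eventually_nhdsLT_pos ((hV x₀ hx₀).lt_of_ne hne)
    (by simpa using frontier_lt_subset_eq hf.continuous continuous_const hx₀)).and
    self_mem_nhdsWithin).exists
  -- `ϕ (-t)` is a volume-preserving self-map of `K`, so its image contains `{f < 0}` and `K`.
  have hback : K ⊆ ϕ (-t) '' K :=
    closure_minimal (subset_image_of_measure_image_eq (ϕ.continuous_toFun _) hK
      (ϕ.mapsTo_closure_setOf_lt_zero hϕ hf hreg hV (fun t _ => (hiso t).lipschitz) hK
        (neg_nonneg.2 htneg.le)) ((hiso _).volume_image K)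
      (isOpen_lt hf.continuous continuous_const) subset_closure)
      (hK.image (ϕ.continuous_toFun _)).isClosed
  obtain ⟨k, hk, rfl⟩ := hback (frontier_subset_closure hx₀)
  rw [← ϕ.map_add, add_neg_cancel, ϕ.map_zero_apply] at ht
  exact (closure_lt_subset_le hf.continuous continuous_const hk).not_gt ht

theorem stmt14_general {n : ℕ} (A : Matrix (Fin n) (Fin n) ℝ) (hA : Aᵀ = -A)
    (c : EuclideanSpace ℝ (Fin n)) (O : Set (EuclideanSpace ℝ (Fin n)))
    (hOb : Bornology.IsBounded O)
    (f : EuclideanSpace ℝ (Fin n) → ℝ) (hf : ContDiff ℝ 1 f)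
    (hOf : O = {x | f x < 0})
    (hreg : ∀ x ∈ frontier O, gradient f x ≠ 0)
    (ν : EuclideanSpace ℝ (Fin n) → EuclideanSpace ℝ (Fin n))
    (hν : ∀ x ∈ frontier O, ν x = -(‖gradient f x‖)⁻¹ • gradient f x)
    (hsign : ∀ x ∈ frontier O, ⟪c + Matrix.toEuclideanLin A x, ν x⟫ ≤ 0) :
    ∀ x ∈ frontier O, ⟪c + Matrix.toEuclideanLin A x, ν x⟫ = 0 := by
  subst hOf
  set M := -toEuclideanCLM (𝕜 := ℝ) A
  have hM : ∀ v, ⟪v, M v⟫ = 0 := fun v => by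
    simp [M, inner_toEuclideanCLM_self_of_transpose_eq_neg hA v]
  have hfderiv_eq : ∀ y ∈ frontier {x | f x < 0},
      fderiv ℝ f y (M y + -c) = ‖gradient f y‖ * ⟪c + toEuclideanLin A y, ν y⟫ := by
    intro y hy
    have hfield : M y + -c = -(c + toEuclideanLin A y) := by
      rw [neg_add_rev]
      rfl
    rw [hν y hy, real_inner_smul_right, hfield, ← toDual_gradient,
      InnerProductSpace.toDual_apply_apply, inner_neg_right, real_inner_comm]
    field_simp [norm_ne_zero_iff.2 (hreg y hy)]
  intro x₀ hx₀
  have h0 := (affineFlow M (-c)).fderiv_apply_eq_zero_of_mem_frontier (hasDerivAt_affineFlow M _)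
    (hf.differentiable one_ne_zero) (fun y hy h => hreg y hy (by rw [gradient, h, map_zero]))
    (fun y hy => hfderiv_eq y hy ▸ mul_nonpos_of_nonneg_of_nonpos (norm_nonneg _) (hsign y hy))
    (isometry_affineFlow hM _) hOb x₀ hx₀
  rw [hfderiv_eq x₀ hx₀] at h0
  exact (mul_eq_zero.1 h0).resolve_left (norm_ne_zero_iff.2 (hreg x₀ hx₀))

/-- Let `O ⊆ ℝⁿ` be a bounded open set with `C¹` boundary (given by a regular
defining function `f`, with inward unit normal `ν = -∇f/‖∇f‖` on `∂O`), let
`A` be a constant skew-symmetric matrix and `c ∈ ℝⁿ`. If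
`(c + A x) ⬝ ν(x) ≤ 0` for every `x ∈ ∂O`, then `(c + A x) ⬝ ν(x) = 0` for
every `x ∈ ∂O`. -/
theorem stmt14 {n : ℕ} (A : Matrix (Fin n) (Fin n) ℝ) (hA : Aᵀ = -A)
    (c : EuclideanSpace ℝ (Fin n)) (O : Set (EuclideanSpace ℝ (Fin n)))
    (hOo : IsOpen O) (hOb : Bornology.IsBounded O)
    (f : EuclideanSpace ℝ (Fin n) → ℝ) (hf : ContDiff ℝ 1 f)
    (hOf : O = {x | f x < 0}) (hfr : frontier O = {x | f x = 0})
    (hreg : ∀ x ∈ frontier O, gradient f x ≠ 0)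
    (ν : EuclideanSpace ℝ (Fin n) → EuclideanSpace ℝ (Fin n))
    (hν : ∀ x ∈ frontier O, ν x = -(‖gradient f x‖)⁻¹ • gradient f x)
    (hsign : ∀ x ∈ frontier O, ⟪c + Matrix.toEuclideanLin A x, ν x⟫ ≤ 0) :
    ∀ x ∈ frontier O, ⟪c + Matrix.toEuclideanLin A x, ν x⟫ = 0 :=
  stmt14_general A hA c O hOb f hf hOf hreg ν hν hsign
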